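/- Let S be an inverse semigroup with zero, K a commutative unital ring, and a = Σ a_s s an element of the contracted semigroup algebra K₀S. The following are equivalent: (S) for every non-zero t ∈ S there exists a non-zero u ≤ t with Σ_{s ≥ u} a_s = 0; (R) for every non-zero idempotent e there exists a non-zero idempotent f ≤ e with a f = 0; (L) for every non-zero idempotent e there exists a non-zero idempotent f ≤ e with f a = 0. -/

import Mathlib

/-- An inverse semigroup with zero. -/
class InverseSemigroup0 (S : Type*) extends Semigroup S, Zero S, Star S where
  zero_mul : ∀ s : S, 0 * s = 0
  mul_zero : ∀ s : S, s * 0 = 0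
  mul_star_mul_self : ∀ s : S, s * star s * s = s
  star_mul_self_star : ∀ s : S, star s * s * star s = star s
  star_unique : ∀ s t : S, s * t * s = s → t * s * t = t → t = star s

/-- The natural partial order on an inverse semigroup. -/
def NatLe {S : Type*} [InverseSemigroup0 S] (a b : S) : Prop := a = b * star a * a

variable (K S : Type*) [CommRing K] [InverseSemigroup0 S]

/-- The ring congruence on the semigroup algebra identifying the zero of `S`
with the zero of the algebra. -/
noncomputable def contractedCon : RingCon (MonoidAlgebra K S) :=
  ringConGen (fun a b => a = MonoidAlgebra.single (0 : S) (1 : K) ∧ b = 0)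

/-- The contracted semigroup algebra `K₀S`: the `K`-algebra with basis `S \ {0}`
and multiplication extending that of `S`, realized as the quotient of the semigroup
algebra of `S` by the span of the zero of `S`. -/
abbrev Kzero := (contractedCon K S).Quotient

/-- The quotient map onto the contracted semigroup algebra. -/
noncomputable def mk0 (a : MonoidAlgebra K S) : Kzero K S :=
  (a : (contractedCon K S).Quotient)

/-- The canonical map `S → K₀S`. -/
noncomputable def iota (s : S) : Kzero K S := mk0 K S (MonoidAlgebra.single s 1)

/-- An element of `K₀S` is singular if for every non-zero idempotent `e` there is a
non-zero idempotent `f ≤ e` with `a f = 0`. -/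
noncomputable def Singular (x : Kzero K S) : Prop :=
  ∀ e : S, IsIdempotentElem e → e ≠ 0 →
    ∃ f : S, IsIdempotentElem f ∧ f ≠ 0 ∧ NatLe f e ∧ x * iota K S f = 0

/-- `J` is a two-sided ideal of the (non-unital) ring `K₀S`. -/
def IsIdealSet (J : Set (Kzero K S)) : Prop :=
  (0 : Kzero K S) ∈ J ∧ (∀ a ∈ J, ∀ b ∈ J, a + b ∈ J) ∧ (∀ a ∈ J, -a ∈ J) ∧
    ∀ a ∈ J, ∀ x : Kzero K S, x * a ∈ J ∧ a * x ∈ J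

/-- The element of the semigroup algebra with coefficient function `b`. -/
noncomputable def toMA (b : S →₀ K) : MonoidAlgebra K S :=
  b.sum fun s c => MonoidAlgebra.single s c

/-!
Idempotents of an inverse semigroup commute, so `s ↦ s⁻¹ = star s` is an anti-automorphism; it
preserves the natural order, turns (L) for `a` into (R) for `Σ a_s s⁻¹`, and preserves (S). So only
(S) ⇔ (R) needs an argument. The coefficient of `a f` at `t ≠ 0` is `Σ_{s f = t} a_s`, and when
`t⁻¹ t = f` the condition `s f = t` says exactly `t ≤ s`.
(R) ⇒ (S): for `t ≠ 0` take `f ≤ t⁻¹ t` with `a f = 0` and `u = t f`.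
(S) ⇒ (R): choose `f ≤ e` with the largest number of coincidences `s f = s' f` among elements of
the support. If `t = s₀ f ≠ 0`, (S) gives `u ≤ t` with vanishing upper sum; passing from `f` to
`F = u⁻¹ u ≤ f` can only create coincidences, hence creates none, so `s f = t ↔ s F = u ↔ u ≤ s`.
-/

namespace InverseSemigroup0

variable {K S}

scoped instance : SemigroupWithZero S :=
  { ‹InverseSemigroup0 S› with
    zero_mul := InverseSemigroup0.zero_mul
    mul_zero := InverseSemigroup0.mul_zero }

protected theorem star_star (s : S) : star (star s) = s :=
  (star_unique (star s) s (star_mul_self_star s) (mul_star_mul_self s)).symm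

scoped instance : InvolutiveStar S := ⟨InverseSemigroup0.star_star⟩

theorem star_eq_of_isIdempotentElem {e : S} (he : IsIdempotentElem e) : star e = e :=
  (star_unique e e (by rw [he.eq, he.eq]) (by rw [he.eq, he.eq])).symm

theorem isIdempotentElem_star_mul_self (s : S) : IsIdempotentElem (star s * s) := by
  rw [IsIdempotentElem, ← mul_assoc, star_mul_self_star]

theorem isIdempotentElem_mul_star_self (s : S) : IsIdempotentElem (s * star s) := by
  rw [IsIdempotentElem, ← mul_assoc, mul_star_mul_self]

/-- The inverse `x` of `e * f` satisfies `x = f * x * e`, which makes `x`, and hence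
`e * f = star x`, idempotent. -/
theorem isIdempotentElem_mul {e f : S} (he : IsIdempotentElem e) (hf : IsIdempotentElem f) :
    IsIdempotentElem (e * f) := by
  set x := star (e * f)
  have hx₁ : e * f * x * (e * f) = e * f := mul_star_mul_self _
  have hx₂ : x * (e * f) * x = x := star_mul_self_star _
  have hfxe : f * x * e = x := by
    refine star_unique (e * f) (f * x * e) ?_ ?_
    · calc e * f * (f * x * e) * (e * f) = e * (f * f) * x * (e * e * f) := by
            simp only [mul_assoc]
        _ = e * f := by rw [hf.eq, he.eq, hx₁]
    · calc f * x * e * (e * f) * (f * x * e) = f * (x * (e * e * (f * f)) * x) * e := by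
            simp only [mul_assoc]
        _ = f * x * e := by rw [hf.eq, he.eq, hx₂]
  have hx : IsIdempotentElem x := by
    calc x * x = f * (x * (e * f) * x) * e := by
          conv_lhs => rw [← hfxe]
          simp only [mul_assoc]
      _ = x := by rw [hx₂, hfxe]
  rwa [← star_star (e * f), star_eq_of_isIdempotentElem hx]

theorem commute_of_isIdempotentElem {e f : S} (he : IsIdempotentElem e)
    (hf : IsIdempotentElem f) : Commute e f := by
  have hfe : f * e = star (e * f) := by
    refine star_unique (e * f) (f * e) ?_ ?_
    · calc e * f * (f * e) * (e * f) = e * (f * f) * (e * e) * f := by simp only [mul_assoc]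
        _ = e * f * (e * f) := by rw [hf.eq, he.eq]; simp only [mul_assoc]
        _ = e * f := (isIdempotentElem_mul he hf).eq
    · calc f * e * (e * f) * (f * e) = f * (e * e) * (f * f) * e := by simp only [mul_assoc]
        _ = f * e * (f * e) := by rw [hf.eq, he.eq]; simp only [mul_assoc]
        _ = f * e := (isIdempotentElem_mul hf he).eq
  rw [Commute, SemiconjBy, hfe, star_eq_of_isIdempotentElem (isIdempotentElem_mul he hf)]

protected theorem star_mul (s t : S) : star (s * t) = star t * star s := by
  have hcomm := commute_of_isIdempotentElem (isIdempotentElem_mul_star_self t)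
    (isIdempotentElem_star_mul_self s)
  refine (star_unique (s * t) (star t * star s) ?_ ?_).symm
  · calc s * t * (star t * star s) * (s * t) = s * ((t * star t) * (star s * s)) * t := by
          simp only [mul_assoc]
      _ = (s * star s * s) * (t * star t * t) := by rw [hcomm.eq]; simp only [mul_assoc]
      _ = s * t := by rw [mul_star_mul_self, mul_star_mul_self]
  · calc star t * star s * (s * t) * (star t * star s)
          = star t * ((star s * s) * (t * star t)) * star s := by simp only [mul_assoc]
      _ = (star t * t * star t) * (star s * s * star s) := by
          rw [← hcomm.eq]; simp only [mul_assoc]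
      _ = star t * star s := by rw [star_mul_self_star, star_mul_self_star]

scoped instance : StarMul S where
  star_mul := InverseSemigroup0.star_mul

protected theorem star_zero : star (0 : S) = 0 :=
  (star_unique 0 0 (by rw [zero_mul, zero_mul]) (by rw [zero_mul, zero_mul])).symm

protected theorem star_eq_zero {s : S} : star s = 0 ↔ s = 0 := by
  refine ⟨fun h => ?_, fun h => ?_⟩
  · rw [← star_star s, h, InverseSemigroup0.star_zero]
  · rw [h, InverseSemigroup0.star_zero]

theorem star_mul_self_ne_zero {u : S} (hu : u ≠ 0) : star u * u ≠ 0 := by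
  intro h
  apply hu
  rw [← mul_star_mul_self u, mul_assoc, h, mul_zero]

theorem natLe_iff {u t : S} : NatLe u t ↔ t * (star u * u) = u := by
  rw [NatLe, mul_assoc, eq_comm]

theorem natLe_iff_of_isIdempotentElem {e f : S} (hf : IsIdempotentElem f) :
    NatLe f e ↔ e * f = f := by
  rw [natLe_iff, star_eq_of_isIdempotentElem hf, hf.eq]

theorem natLe_star {u s : S} (h : NatLe u s) : NatLe (star u) (star s) := by
  have hu : s * (star u * u) = u := natLe_iff.1 h
  have hsu : star u * u * star s = star u := by
    conv_rhs => rw [← hu, star_mul, star_eq_of_isIdempotentElem (isIdempotentElem_star_mul_self u)]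
  have hcomm := commute_of_isIdempotentElem (isIdempotentElem_star_mul_self s)
    (isIdempotentElem_star_mul_self u)
  have huu : u * star u = s * star u := by
    nth_rewrite 1 [← hu]
    rw [mul_assoc, star_mul_self_star]
  rw [natLe_iff, star_star]
  calc star s * (u * star u) = star s * s * (star u * u * star s) := by
        rw [huu, hsu, mul_assoc]
    _ = star u * u * (star s * s * star s) := by
        rw [← mul_assoc (star s * s), hcomm.eq]; simp only [mul_assoc]
    _ = star u := by rw [star_mul_self_star, hsu]

theorem natLe_star_iff {u s : S} : NatLe (star u) (star s) ↔ NatLe u s :=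
  ⟨fun h => by simpa only [star_star] using natLe_star h, natLe_star⟩

theorem star_mul_self_mul_of_natLe {f t : S} (hf : IsIdempotentElem f)
    (h : NatLe f (star t * t)) : star (t * f) * (t * f) = f := by
  calc star (t * f) * (t * f) = f * (star t * t * f) := by
        rw [star_mul, star_eq_of_isIdempotentElem hf]; simp only [mul_assoc]
    _ = f := by
        rw [(natLe_iff_of_isIdempotentElem hf).1 h, hf.eq]

theorem mul_star_mul_self_of_natLe_mul {f s u : S} (hf : IsIdempotentElem f)
    (h : NatLe u (s * f)) : f * (star u * u) = star u * u := by
  have hu : s * f * (star u * u) = u := natLe_iff.1 h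
  have hcomm := commute_of_isIdempotentElem hf (isIdempotentElem_star_mul_self u)
  have huf : u * f = u := by
    conv_lhs => rw [← hu]
    rw [mul_assoc _ _ f, ← hcomm.eq, ← mul_assoc, mul_assoc s, hf.eq, hu]
  rw [hcomm.eq, mul_assoc, huf]

section FormalSums

open Finset Classical

variable {M : Type*} [AddCommMonoid M]

/- `T` and `w` encode the formal sum `Σ_{s ∈ T} w s • s`; `IsRightAnnihilator T w f` says that its
product with `f` vanishes in `K₀S`, coefficient by coefficient. -/

def UpperSumsVanish (T : Finset S) (w : S → M) : Prop :=
  ∀ t : S, t ≠ 0 → ∃ u : S, u ≠ 0 ∧ NatLe u t ∧ ∑ s ∈ T.filter fun s => NatLe u s, w s = 0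

def IsRightAnnihilator (T : Finset S) (w : S → M) (f : S) : Prop :=
  ∀ t : S, t ≠ 0 → ∑ s ∈ T.filter fun s => s * f = t, w s = 0

def IsLeftAnnihilator (T : Finset S) (w : S → M) (f : S) : Prop :=
  ∀ t : S, t ≠ 0 → ∑ s ∈ T.filter fun s => f * s = t, w s = 0

noncomputable def coincidences (T : Finset S) (f : S) : Finset (S × S) :=
  (T ×ˢ T).filter fun p => p.1 * f = p.2 * f

theorem coincidences_mono {T : Finset S} {f F : S} (h : f * F = F) :
    coincidences T f ⊆ coincidences T F := by
  intro p hp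
  simp only [coincidences, mem_filter] at hp ⊢
  refine ⟨hp.1, ?_⟩
  rw [← h, ← mul_assoc, hp.2, mul_assoc]

theorem exists_isRightAnnihilator {T : Finset S} {w : S → M} (hw : UpperSumsVanish T w)
    {e : S} (he : IsIdempotentElem e) (he0 : e ≠ 0) :
    ∃ f, IsIdempotentElem f ∧ f ≠ 0 ∧ NatLe f e ∧ IsRightAnnihilator T w f := by
  set A : Set S := {f | IsIdempotentElem f ∧ f ≠ 0 ∧ NatLe f e}
  have hbdd : BddAbove ((fun f => #(coincidences T f)) '' A) :=
    ⟨#(T ×ˢ T), by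
      rintro _ ⟨f, -, rfl⟩
      exact card_le_card (filter_subset _ _)⟩
  have hne : A.Nonempty := ⟨e, he, he0, (natLe_iff_of_isIdempotentElem he).2 he.eq⟩
  obtain ⟨f, ⟨hf, hf0, hfe⟩, hfmax⟩ := Nat.sSup_mem (hne.image _) hbdd
  refine ⟨f, hf, hf0, hfe, fun t ht => ?_⟩
  by_cases hattained : ¬∃ s₀ ∈ T, s₀ * f = t
  · exact sum_eq_zero fun s hs => (hattained ⟨s, mem_filter.1 hs⟩).elim
  obtain ⟨s₀, hs₀, rfl⟩ := not_not.1 hattained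
  obtain ⟨u, hu0, hut, hsum⟩ := hw _ ht
  set F := star u * u
  have hFf : f * F = F := mul_star_mul_self_of_natLe_mul hf hut
  have hFe : e * F = F := by
    rw [← hFf, ← mul_assoc, (natLe_iff_of_isIdempotentElem hf).1 hfe]
  have hFA : F ∈ A := ⟨isIdempotentElem_star_mul_self u, star_mul_self_ne_zero hu0,
    (natLe_iff_of_isIdempotentElem (isIdempotentElem_star_mul_self u)).2 hFe⟩
  have hcoinc : coincidences T f = coincidences T F :=
    eq_of_subset_of_card_le (coincidences_mono hFf) ((le_csSup hbdd ⟨F, hFA, rfl⟩).trans hfmax.ge)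
  have hu : s₀ * F = u := by rw [← hFf, ← mul_assoc]; exact natLe_iff.1 hut
  rw [← hsum]
  refine sum_congr ?_ fun _ _ => rfl
  ext s
  simp only [mem_filter, and_congr_right_iff]
  intro hs
  have := Finset.ext_iff.1 hcoinc (s, s₀)
  simp only [coincidences, mem_filter, mem_product, hs, hs₀, true_and] at this
  rw [this, hu, natLe_iff]

theorem upperSumsVanish_of_forall_exists_isRightAnnihilator {T : Finset S} {w : S → M}
    (h : ∀ e : S, IsIdempotentElem e → e ≠ 0 →
      ∃ f, IsIdempotentElem f ∧ f ≠ 0 ∧ NatLe f e ∧ IsRightAnnihilator T w f) :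
    UpperSumsVanish T w := by
  intro t ht
  obtain ⟨f, hf, hf0, hft, hann⟩ :=
    h _ (isIdempotentElem_star_mul_self t) (star_mul_self_ne_zero ht)
  have hdom : star (t * f) * (t * f) = f := star_mul_self_mul_of_natLe hf hft
  have hu0 : t * f ≠ 0 := by
    rintro h
    rw [h, mul_zero] at hdom
    exact hf0 hdom.symm
  refine ⟨t * f, hu0, by rw [natLe_iff, hdom], ?_⟩
  simp only [natLe_iff, hdom]
  exact hann _ hu0

theorem upperSumsVanish_iff_forall_exists_isRightAnnihilator {T : Finset S} {w : S → M} :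
    UpperSumsVanish T w ↔ ∀ e : S, IsIdempotentElem e → e ≠ 0 →
      ∃ f, IsIdempotentElem f ∧ f ≠ 0 ∧ NatLe f e ∧ IsRightAnnihilator T w f :=
  ⟨fun hw _ he he0 => exists_isRightAnnihilator hw he he0,
    upperSumsVanish_of_forall_exists_isRightAnnihilator⟩

theorem UpperSumsVanish.comp_star {T T' : Finset S} {w : S → M} (hT : ∀ s, s ∈ T' ↔ star s ∈ T)
    (hw : UpperSumsVanish T w) : UpperSumsVanish T' (w ∘ star) := by
  intro t ht
  obtain ⟨u, hu0, hut, hsum⟩ := hw (star t) (by rwa [Ne, InverseSemigroup0.star_eq_zero])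
  refine ⟨star u, by rwa [Ne, InverseSemigroup0.star_eq_zero], by
    simpa only [star_star] using natLe_star hut, ?_⟩
  rw [← hsum]
  refine sum_nbij' star star ?_ ?_ (fun _ _ => star_star _) (fun _ _ => star_star _)
    (fun _ _ => rfl) <;> intro s hs <;> rw [mem_filter] at hs ⊢
  · rwa [← hT, ← natLe_star_iff, star_star]
  · rwa [hT, star_star, natLe_star_iff]

theorem upperSumsVanish_star_iff {T T' : Finset S} {w : S → M}
    (hT : ∀ s, s ∈ T' ↔ star s ∈ T) :
    UpperSumsVanish T' (w ∘ star) ↔ UpperSumsVanish T w := by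
  refine ⟨fun h => ?_, UpperSumsVanish.comp_star hT⟩
  simpa only [Function.comp_def, star_star] using
    h.comp_star (T' := T) fun s => by rw [hT, star_star]

theorem isLeftAnnihilator_iff_isRightAnnihilator_star {T T' : Finset S} {w : S → M}
    (hT : ∀ s, s ∈ T' ↔ star s ∈ T) {f : S} (hf : IsIdempotentElem f) :
    IsLeftAnnihilator T w f ↔ IsRightAnnihilator T' (w ∘ star) f := by
  have hmul : ∀ s t : S, star s * f = t ↔ f * s = star t := fun s t => by
    rw [← star_inj, star_mul, star_star, star_eq_of_isIdempotentElem hf]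
  have hsum : ∀ t : S, ∑ s ∈ T.filter fun s => f * s = star t, w s =
      ∑ s ∈ T'.filter fun s => s * f = t, (w ∘ star) s := fun t => by
    refine sum_nbij' star star ?_ ?_ (fun _ _ => star_star _) (fun _ _ => star_star _)
      (fun s _ => congrArg w (star_star s).symm) <;> intro s hs <;> rw [mem_filter] at hs ⊢
    · rwa [hT, star_star, hmul]
    · rwa [← hT, ← hmul, star_star]
  refine ⟨fun h t ht => ?_, fun h t ht => ?_⟩
  · rw [← hsum]
    exact h _ (by rwa [Ne, InverseSemigroup0.star_eq_zero])
  · rw [← star_star t, hsum]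
    exact h _ (by rwa [Ne, InverseSemigroup0.star_eq_zero])

theorem upperSumsVanish_iff_forall_exists_isLeftAnnihilator {T : Finset S} {w : S → M} :
    UpperSumsVanish T w ↔ ∀ e : S, IsIdempotentElem e → e ≠ 0 →
      ∃ f, IsIdempotentElem f ∧ f ≠ 0 ∧ NatLe f e ∧ IsLeftAnnihilator T w f := by
  have hT : ∀ s, s ∈ T.preimage star star_injective.injOn ↔ star s ∈ T := fun _ => mem_preimage
  rw [← upperSumsVanish_star_iff hT, upperSumsVanish_iff_forall_exists_isRightAnnihilator]
  refine forall₃_congr fun e _ _ => exists_congr fun f => and_congr_right fun hf => ?_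
  rw [isLeftAnnihilator_iff_isRightAnnihilator_star hT hf]

end FormalSums

section ContractedAlgebra

open MonoidAlgebra Classical

theorem eq_single_zero_of_coeff_eq_zero {x : MonoidAlgebra K S}
    (hx : ∀ s : S, s ≠ 0 → x.coeff s = 0) : x = single 0 (x.coeff 0) := by
  ext s
  by_cases hs : s = 0
  · subst hs; simp
  · simp [hx s hs, Ne.symm hs]

def agreeOffZeroCon : RingCon (MonoidAlgebra K S) where
  r x y := ∀ s : S, s ≠ 0 → x.coeff s = y.coeff s
  iseqv := ⟨fun _ _ _ => rfl, fun h s hs => (h s hs).symm,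
    fun h₁ h₂ s hs => (h₁ s hs).trans (h₂ s hs)⟩
  add' h₁ h₂ s hs := by simp only [coeff_add, Finsupp.add_apply, h₁ s hs, h₂ s hs]
  mul' {x y z w} hxy hzw s hs := by
    have hx : x - y = single 0 ((x - y).coeff 0) := eq_single_zero_of_coeff_eq_zero fun s hs => by
      simp [coeff_sub, hxy s hs]
    have hz : z - w = single 0 ((z - w).coeff 0) := eq_single_zero_of_coeff_eq_zero fun s hs => by
      simp [coeff_sub, hzw s hs]
    have hzero : ∀ d : S, d * 0 ≠ s ∧ 0 * d ≠ s := fun d => by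
      simp only [mul_zero, zero_mul]; exact ⟨Ne.symm hs, Ne.symm hs⟩
    rw [← sub_eq_zero, ← Finsupp.sub_apply, ← coeff_sub,
      show x * z - y * w = x * (z - w) + (x - y) * w by noncomm_ring, hz, hx, coeff_add,
      Finsupp.add_apply, coeff_mul_single_of_forall_mul_ne _ _ fun d => (hzero d).1,
      coeff_single_mul_of_forall_mul_ne _ _ fun d => (hzero d).2, add_zero]

theorem mk0_eq_zero_iff {x : MonoidAlgebra K S} :
    mk0 K S x = 0 ↔ ∀ s : S, s ≠ 0 → x.coeff s = 0 := by
  rw [mk0, ← RingCon.coe_zero, RingCon.eq]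
  constructor
  · have hle : contractedCon K S ≤ agreeOffZeroCon :=
      RingCon.ringConGen_le.2 fun _ _ ⟨h₁, h₂⟩ s hs => by subst h₁ h₂; simp [Ne.symm hs]
    exact fun h => hle h
  · intro hx
    have hgen : contractedCon K S (single 0 1) 0 := RingCon.le_ringConGen _ _ ⟨rfl, rfl⟩
    rw [eq_single_zero_of_coeff_eq_zero hx]
    simpa using (contractedCon K S).mul ((contractedCon K S).refl (single 0 (x.coeff 0))) hgen

omit [InverseSemigroup0 S] in
theorem toMA_eq_ofCoeff (b : S →₀ K) : toMA K S b = ofCoeff b :=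
  sum_coeff_single (ofCoeff b)

theorem coeff_toMA_mul_single (b : S →₀ K) (f t : S) :
    (toMA K S b * single f 1).coeff t = ∑ s ∈ b.support.filter fun s => s * f = t, b s := by
  rw [toMA_eq_ofCoeff, coeff_mul, coeff_single, Finset.sum_filter, Finsupp.sum]
  refine Finset.sum_congr rfl fun s _ => ?_
  rw [Finsupp.sum_single_index] <;> simp

theorem coeff_single_mul_toMA (b : S →₀ K) (f t : S) :
    (single f 1 * toMA K S b).coeff t = ∑ s ∈ b.support.filter fun s => f * s = t, b s := by
  rw [toMA_eq_ofCoeff, coeff_mul, coeff_single, Finset.sum_filter, Finsupp.sum_single_index]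
  · simp [Finsupp.sum]
  · simp

theorem mk0_mul_iota_eq_zero_iff (b : S →₀ K) (f : S) :
    mk0 K S (toMA K S b) * iota K S f = 0 ↔ IsRightAnnihilator b.support b f := by
  rw [iota, mk0, mk0, ← RingCon.coe_mul, ← mk0, mk0_eq_zero_iff]
  simp only [coeff_toMA_mul_single]
  rfl

theorem iota_mul_mk0_eq_zero_iff (b : S →₀ K) (f : S) :
    iota K S f * mk0 K S (toMA K S b) = 0 ↔ IsLeftAnnihilator b.support b f := by
  rw [iota, mk0, mk0, ← RingCon.coe_mul, ← mk0, mk0_eq_zero_iff]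
  simp only [coeff_single_mul_toMA]
  rfl

end ContractedAlgebra

end InverseSemigroup0

open Classical in
theorem stmt7_general {K S : Type*} [CommRing K] [InverseSemigroup0 S]
    (b : S →₀ K) :
    List.TFAE
      [∀ t : S, t ≠ 0 → ∃ u : S, u ≠ 0 ∧ NatLe u t ∧
          (∑ s ∈ b.support.filter fun s => NatLe u s, b s) = 0,
       ∀ e : S, IsIdempotentElem e → e ≠ 0 → ∃ f : S, IsIdempotentElem f ∧ f ≠ 0 ∧
          NatLe f e ∧ mk0 K S (toMA K S b) * iota K S f = 0,
       ∀ e : S, IsIdempotentElem e → e ≠ 0 → ∃ f : S, IsIdempotentElem f ∧ f ≠ 0 ∧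
          NatLe f e ∧ iota K S f * mk0 K S (toMA K S b) = 0] := by
  simp only [InverseSemigroup0.mk0_mul_iota_eq_zero_iff,
    InverseSemigroup0.iota_mul_mk0_eq_zero_iff]
  tfae_have 1 ↔ 2 := InverseSemigroup0.upperSumsVanish_iff_forall_exists_isRightAnnihilator
  tfae_have 1 ↔ 3 := InverseSemigroup0.upperSumsVanish_iff_forall_exists_isLeftAnnihilator
  tfae_finish

open Classical in
/-- For an element `a = Σ a_s s` of `K₀S` the following are equivalent:
(S) for every `t ≠ 0` there is `0 ≠ u ≤ t` with `Σ_{s ≥ u} a_s = 0`;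
(R) for every non-zero idempotent `e` there is a non-zero idempotent `f ≤ e` with `a f = 0`;
(L) for every non-zero idempotent `e` there is a non-zero idempotent `f ≤ e` with `f a = 0`. -/
theorem stmt7 {K S : Type*} [CommRing K] [InverseSemigroup0 S]
    (b : S →₀ K) (hb0 : b 0 = 0) :
    List.TFAE
      [∀ t : S, t ≠ 0 → ∃ u : S, u ≠ 0 ∧ NatLe u t ∧
          (∑ s ∈ b.support.filter fun s => NatLe u s, b s) = 0,
       ∀ e : S, IsIdempotentElem e → e ≠ 0 → ∃ f : S, IsIdempotentElem f ∧ f ≠ 0 ∧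
          NatLe f e ∧ mk0 K S (toMA K S b) * iota K S f = 0,
       ∀ e : S, IsIdempotentElem e → e ≠ 0 → ∃ f : S, IsIdempotentElem f ∧ f ≠ 0 ∧
          NatLe f e ∧ iota K S f * mk0 K S (toMA K S b) = 0] :=
  stmt7_general b
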